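/- arXiv:2506.06859 — 6 statements merged into one kernel-verified Lean document; each statement's English description precedes it below -/
import Mathlib

section
/- If I₁ and I₂ are both compatible complex structures on Q, then I₁ = I₂. (Uniqueness of the complex structure determined by a transverse holomorphic symplectic form, as asserted in Appendix A of the paper.) -/
open Submodule Module TensorProduct

/-- The orthogonal complement `W^{⊥B}` of a subspace `W` of `V` with respect to a
bilinear map `B : V × V → N`, i.e. `{v ∈ V : B v w = 0 for all w ∈ W}`. -/
def perpB {R V N : Type*} [CommRing R] [AddCommGroup V] [Module R V]
    [AddCommGroup N] [Module R N]
    (B : V →ₗ[R] V →ₗ[R] N) (W : Submodule R V) : Submodule R V where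
  carrier := {v | ∀ w ∈ W, B v w = 0}
  add_mem' := by
    intro a b ha hb w hw
    simp only [Set.mem_setOf_eq] at ha hb
    simp [ha w hw, hb w hw]
  zero_mem' := by
    intro w hw
    simp
  smul_mem' := by
    intro c a ha w hw
    simp only [Set.mem_setOf_eq] at ha
    simp [ha w hw]

/-- If `I₁` and `I₂` are both compatible complex structures on
`Q = V / V^{⊥Ω}` (i.e. `Iₖ ∘ Iₖ = -id` and `Re Ω̃(u, v) = Im Ω̃(Iₖ u, v)` for the form
`Ω̃` induced by the alternating ℝ-bilinear map `Ω : V × V → ℂ`), then `I₁ = I₂`. -/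
theorem stmt_0 {V : Type*} [AddCommGroup V] [Module ℝ V] [FiniteDimensional ℝ V]
    (Ω : V →ₗ[ℝ] V →ₗ[ℝ] ℂ) (hAlt : ∀ v : V, Ω v v = 0)
    (Ωq : (V ⧸ perpB Ω ⊤) →ₗ[ℝ] (V ⧸ perpB Ω ⊤) →ₗ[ℝ] ℂ)
    (hΩq : ∀ u v : V, Ωq ((perpB Ω ⊤).mkQ u) ((perpB Ω ⊤).mkQ v) = Ω u v)
    (I₁ I₂ : (V ⧸ perpB Ω ⊤) →ₗ[ℝ] (V ⧸ perpB Ω ⊤))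
    (hI₁ : ∀ q, I₁ (I₁ q) = -q) (hI₂ : ∀ q, I₂ (I₂ q) = -q)
    (hc₁ : ∀ u v, (Ωq u v).re = (Ωq (I₁ u) v).im)
    (hc₂ : ∀ u v, (Ωq u v).re = (Ωq (I₂ u) v).im) :
    I₁ = I₂ := by
  -- First: Ωq (I₁ u) v = Ωq (I₂ u) v for all u v.
  have key : ∀ u v, Ωq (I₁ u) v = Ωq (I₂ u) v := by
    intro u v
    apply Complex.ext
    · -- re parts: Re Ωq (I u) v = Im Ωq (I (I u)) v = -Im Ωq u v
      have h1 : (Ωq (I₁ u) v).re = -(Ωq u v).im := by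
        rw [hc₁ (I₁ u) v, hI₁ u]
        simp
      have h2 : (Ωq (I₂ u) v).re = -(Ωq u v).im := by
        rw [hc₂ (I₂ u) v, hI₂ u]
        simp
      rw [h1, h2]
    · rw [← hc₁ u v, ← hc₂ u v]
  refine LinearMap.ext fun u => ?_
  have hd : ∀ v, Ωq (I₁ u - I₂ u) v = 0 := by
    intro v
    rw [map_sub, LinearMap.sub_apply, key u v, sub_self]
  obtain ⟨y, hy⟩ := (perpB Ω ⊤).mkQ_surjective (I₁ u - I₂ u)
  have hy0 : y ∈ perpB Ω ⊤ := by
    intro w _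
    rw [← hΩq y w, hy]
    exact hd _
  have : I₁ u - I₂ u = 0 := by
    rw [← hy, Submodule.mkQ_apply, Submodule.Quotient.mk_eq_zero]
    exact hy0
  have := sub_eq_zero.mp this
  simpa using this
end

section
/- For every subspace W ⊆ V, the image p(W^{⊥Ω}) ⊆ Q is I-invariant, i.e. I(p(W^{⊥Ω})) ⊆ p(W^{⊥Ω}). (Item 2 of Proposition A.1 of the paper.) -/
open Submodule Module TensorProduct

/-- For every subspace `W ⊆ V`, the image `p(W^{⊥Ω}) ⊆ Q` is
`I`-invariant, i.e. `I(p(W^{⊥Ω})) ⊆ p(W^{⊥Ω})`. -/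
theorem stmt_2 {V : Type*} [AddCommGroup V] [Module ℝ V] [FiniteDimensional ℝ V]
    (Ω : V →ₗ[ℝ] V →ₗ[ℝ] ℂ) (hAlt : ∀ v : V, Ω v v = 0)
    (Ωq : (V ⧸ perpB Ω ⊤) →ₗ[ℝ] (V ⧸ perpB Ω ⊤) →ₗ[ℝ] ℂ)
    (hΩq : ∀ u v : V, Ωq ((perpB Ω ⊤).mkQ u) ((perpB Ω ⊤).mkQ v) = Ω u v)
    (I : (V ⧸ perpB Ω ⊤) →ₗ[ℝ] (V ⧸ perpB Ω ⊤))
    (hI : ∀ q, I (I q) = -q)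
    (hcompat : ∀ u v, (Ωq u v).re = (Ωq (I u) v).im) :
    ∀ W : Submodule ℝ V,
      ((perpB Ω W).map (perpB Ω ⊤).mkQ).map I ≤ (perpB Ω W).map (perpB Ω ⊤).mkQ := by
  intro W x hx
  obtain ⟨y, ⟨v, hv, rfl⟩, rfl⟩ := hx
  obtain ⟨v', hv'⟩ := (perpB Ω ⊤).mkQ_surjective (I ((perpB Ω ⊤).mkQ v))
  refine ⟨v', fun w hw => ?_, hv'⟩
  have h0 : Ω v w = 0 := hv w hw
  have h1 : Ω v' w = Ωq (I ((perpB Ω ⊤).mkQ v)) ((perpB Ω ⊤).mkQ w) := by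
    rw [← hΩq, hv']
  have him : (Ωq (I ((perpB Ω ⊤).mkQ v)) ((perpB Ω ⊤).mkQ w)).im = 0 := by
    rw [← hcompat, hΩq, h0]; rfl
  have hre : (Ωq (I ((perpB Ω ⊤).mkQ v)) ((perpB Ω ⊤).mkQ w)).re = 0 := by
    rw [hcompat, hI]
    simp only [map_neg, LinearMap.neg_apply, Complex.neg_im, ← Submodule.mkQ_apply, hΩq, h0,
      Complex.zero_im, neg_zero]
  rw [h1]
  exact Complex.ext hre him
end

section
/- For every subspace W ⊆ V one has W^{⊥Ω} = Ŵ^{⊥Ω}, where Ŵ := p⁻¹(p(W) + I(p(W))) is the preimage in V of the subspace of Q spanned by p(W) and I(p(W)). (Item 3 of Proposition A.1 of the paper.) -/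
open Submodule Module TensorProduct

/-- For every subspace `W ⊆ V` one has `W^{⊥Ω} = Ŵ^{⊥Ω}`, where
`Ŵ = p⁻¹(p(W) + I(p(W)))`. -/
theorem stmt_3 {V : Type*} [AddCommGroup V] [Module ℝ V] [FiniteDimensional ℝ V]
    (Ω : V →ₗ[ℝ] V →ₗ[ℝ] ℂ) (hAlt : ∀ v : V, Ω v v = 0)
    (Ωq : (V ⧸ perpB Ω ⊤) →ₗ[ℝ] (V ⧸ perpB Ω ⊤) →ₗ[ℝ] ℂ)
    (hΩq : ∀ u v : V, Ωq ((perpB Ω ⊤).mkQ u) ((perpB Ω ⊤).mkQ v) = Ω u v)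
    (I : (V ⧸ perpB Ω ⊤) →ₗ[ℝ] (V ⧸ perpB Ω ⊤))
    (hI : ∀ q, I (I q) = -q)
    (hcompat : ∀ u v, (Ωq u v).re = (Ωq (I u) v).im) :
    ∀ W : Submodule ℝ V,
      perpB Ω W = perpB Ω (Submodule.comap (perpB Ω ⊤).mkQ
        (W.map (perpB Ω ⊤).mkQ ⊔ (W.map (perpB Ω ⊤).mkQ).map I)) := by
  intro W
  -- Ω is antisymmetric
  have hskewΩ : ∀ u v : V, Ω u v = -Ω v u := by
    intro u v
    have h := hAlt (u + v)
    simp only [map_add, LinearMap.add_apply, hAlt] at h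
    linear_combination h
  -- Ωq is antisymmetric
  have hskew : ∀ u v : V ⧸ perpB Ω ⊤, Ωq u v = -Ωq v u := by
    intro u v
    obtain ⟨x, rfl⟩ := (perpB Ω ⊤).mkQ_surjective u
    obtain ⟨y, rfl⟩ := (perpB Ω ⊤).mkQ_surjective v
    rw [hΩq, hΩq, hskewΩ]
  -- key: vanishing is preserved by applying I on the right
  have key : ∀ u v : V ⧸ perpB Ω ⊤, Ωq u v = 0 → Ωq u (I v) = 0 := by
    intro u v h
    have h1 : Ωq u (I v) = -Ωq (I v) u := hskew u (I v)
    have hre : (Ωq u (I v)).re = 0 := by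
      rw [h1]
      have : (Ωq (I v) u).re = (Ωq (I (I v)) u).im := hcompat (I v) u
      rw [hI v] at this
      simp only [map_neg, LinearMap.neg_apply] at this
      have h2 : Ωq v u = -Ωq u v := by rw [hskew v u]
      simp [this, h2, h]
    have him : (Ωq u (I v)).im = 0 := by
      rw [h1]
      have : (Ωq v u).re = (Ωq (I v) u).im := hcompat v u
      have h2 : Ωq v u = -Ωq u v := by rw [hskew v u]
      rw [h2, h] at this
      simp [← this]
    exact Complex.ext hre him
  apply le_antisymm
  · intro v hv w hw
    simp only [Submodule.mem_comap, Submodule.mem_sup] at hw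
    obtain ⟨y, hy, z, hz, hyz⟩ := hw
    obtain ⟨w₁, hw₁, rfl⟩ := hy
    obtain ⟨z', hz', rfl⟩ := hz
    obtain ⟨w₂, hw₂, rfl⟩ := hz'
    have h1 : Ωq ((perpB Ω ⊤).mkQ v) ((perpB Ω ⊤).mkQ w₁) = 0 := by
      rw [hΩq]; exact hv w₁ hw₁
    have h2 : Ωq ((perpB Ω ⊤).mkQ v) (I ((perpB Ω ⊤).mkQ w₂)) = 0 := by
      apply key
      rw [hΩq]; exact hv w₂ hw₂
    have : Ω v w = Ωq ((perpB Ω ⊤).mkQ v) ((perpB Ω ⊤).mkQ w) := (hΩq v w).symm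
    rw [this, ← hyz, map_add, h1, h2, add_zero]
  · intro v hv w hw
    apply hv
    simp only [Submodule.mem_comap]
    exact Submodule.mem_sup_left ⟨w, hw, rfl⟩
end

section
/- Let W ⊆ V be a subspace with R ⊆ W and I(p(W)) ⊆ p(W). Then: (i) W^{⊥Ω} = W^{⊥ω}; (ii) (W^{⊥Ω})^{⊥Ω} = W; and (iii) dim_ℝ W + dim_ℝ W^{⊥Ω} = dim_ℝ V + dim_ℝ R. (Item 4 of Proposition A.1 of the paper.) -/
open Submodule Module TensorProduct

/-- If `R ⊆ W` and `I(p(W)) ⊆ p(W)`, then (i) `W^{⊥Ω} = W^{⊥ω}` (where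
`ω = Im Ω`); (ii) `(W^{⊥Ω})^{⊥Ω} = W`; (iii) `dim W + dim W^{⊥Ω} = dim V + dim R`. -/
theorem stmt_4 {V : Type*} [AddCommGroup V] [Module ℝ V] [FiniteDimensional ℝ V]
    (Ω : V →ₗ[ℝ] V →ₗ[ℝ] ℂ) (hAlt : ∀ v : V, Ω v v = 0)
    (Ωq : (V ⧸ perpB Ω ⊤) →ₗ[ℝ] (V ⧸ perpB Ω ⊤) →ₗ[ℝ] ℂ)
    (hΩq : ∀ u v : V, Ωq ((perpB Ω ⊤).mkQ u) ((perpB Ω ⊤).mkQ v) = Ω u v)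
    (I : (V ⧸ perpB Ω ⊤) →ₗ[ℝ] (V ⧸ perpB Ω ⊤))
    (hI : ∀ q, I (I q) = -q)
    (hcompat : ∀ u v, (Ωq u v).re = (Ωq (I u) v).im)
    (W : Submodule ℝ V)
    (hRW : perpB Ω ⊤ ≤ W)
    (hIW : (W.map (perpB Ω ⊤).mkQ).map I ≤ W.map (perpB Ω ⊤).mkQ) :
    perpB Ω W = perpB (Ω.compr₂ Complex.imLm) W ∧
    perpB Ω (perpB Ω W) = W ∧
        finrank ℝ ↥W + finrank ℝ ↥(perpB Ω W) = finrank ℝ V + finrank ℝ ↥(perpB Ω ⊤) := by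
  set ω : LinearMap.BilinForm ℝ V := Ω.compr₂ Complex.imLm with hω
  have hωapp : ∀ u v : V, ω u v = (Ω u v).im := fun u v => rfl
  -- skew-symmetry of Ω
  have skew : ∀ u v : V, Ω u v = -Ω v u := by
    intro u v
    have h := hAlt (u + v)
    simp only [map_add, LinearMap.add_apply, hAlt u, hAlt v, zero_add, add_zero] at h
    linear_combination h
  have hωalt : ω.IsAlt := fun v => by simp [hωapp, hAlt]
  have hωrefl : ω.IsRefl := hωalt.isRefl
  -- perpB ω agrees with mathlib's orthogonal
  have hperp_orth : ∀ X : Submodule ℝ V, perpB ω X = ω.orthogonal X := by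
    intro X
    ext v
    constructor
    · intro hv w hw
      exact hωrefl v w (hv w hw)
    · intro hv w hw
      exact hωrefl w v (hv w hw)
  -- perpB Ω is always contained in perpB ω
  have hsub : ∀ X : Submodule ℝ V, perpB Ω X ≤ perpB ω X := by
    intro X v hv w hw
    rw [hωapp, hv w hw, Complex.zero_im]
  -- key lemma (i), in generality sufficient for both W and ⊤
  have key : ∀ X : Submodule ℝ V,
      (X.map (perpB Ω ⊤).mkQ).map I ≤ X.map (perpB Ω ⊤).mkQ →
      perpB Ω X = perpB ω X := by
    intro X hIX
    refine le_antisymm (hsub X) ?_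
    intro v hv w hw
    have him : (Ω v w).im = 0 := hv w hw
    have hre : (Ω v w).re = 0 := by
      have hmem : I ((perpB Ω ⊤).mkQ w) ∈ X.map (perpB Ω ⊤).mkQ :=
        hIX ⟨(perpB Ω ⊤).mkQ w, Submodule.mem_map_of_mem hw, rfl⟩
      obtain ⟨w', hw', hw'eq⟩ := hmem
      have h1 : (Ω v w).re = -(Ω w v).re := by rw [skew v w]; simp
      have h2 : (Ω w v).re = (Ωq (I ((perpB Ω ⊤).mkQ w)) ((perpB Ω ⊤).mkQ v)).im := by
        rw [← hΩq w v]; exact hcompat _ _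
      have h3 : (Ωq (I ((perpB Ω ⊤).mkQ w)) ((perpB Ω ⊤).mkQ v)).im = (Ω w' v).im := by
        rw [← hw'eq, hΩq]
      have h4 : (Ω w' v).im = -(Ω v w').im := by rw [skew w' v]; simp
      have h5 : (Ω v w').im = 0 := hv w' hw'
      rw [h1, h2, h3, h4, h5, neg_neg]
    exact Complex.ext hre him
  -- (i)
  have hi : perpB Ω W = perpB ω W := key W hIW
  -- radical identification
  have hrad : perpB Ω ⊤ = perpB ω ⊤ := by
    refine key ⊤ ?_
    rw [Submodule.map_top, Submodule.range_mkQ]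
    exact le_top
  have hrad_le : ∀ X : Submodule ℝ V, perpB ω ⊤ ≤ perpB ω X := by
    intro X v hv w hw
    exact hv w trivial
  have horth_top : ω.orthogonal ⊤ = perpB ω ⊤ := (hperp_orth ⊤).symm
  -- finrank identity (iii)
  have hiii : finrank ℝ ↥W + finrank ℝ ↥(perpB Ω W)
      = finrank ℝ V + finrank ℝ ↥(perpB Ω ⊤) := by
    rw [hi, hperp_orth]
    rw [LinearMap.BilinForm.finrank_add_finrank_orthogonal hωrefl W]
    congr 1
    have heq : W ⊓ ω.orthogonal ⊤ = perpB Ω ⊤ := by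
      rw [horth_top, ← hrad]; exact inf_eq_right.mpr hRW
    rw [heq]
  -- second finrank identity, for the orthogonal of W
  have hiii2 : finrank ℝ ↥(ω.orthogonal W) + finrank ℝ ↥(ω.orthogonal (ω.orthogonal W))
      = finrank ℝ V + finrank ℝ ↥(perpB Ω ⊤) := by
    rw [LinearMap.BilinForm.finrank_add_finrank_orthogonal hωrefl (ω.orthogonal W)]
    congr 1
    have heq : ω.orthogonal W ⊓ ω.orthogonal ⊤ = perpB Ω ⊤ := by
      rw [horth_top, ← hrad]
      refine inf_eq_right.mpr ?_
      rw [hrad, ← hperp_orth W]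
      exact hrad_le W
    rw [heq]
  have hfr : finrank ℝ ↥(ω.orthogonal (ω.orthogonal W)) = finrank ℝ ↥W := by
    have h := hiii
    rw [hi, hperp_orth] at h
    omega
  -- (ii)
  have hii : perpB Ω (perpB Ω W) = W := by
    have hle1 : W ≤ perpB Ω (perpB Ω W) := by
      intro w hw v hv
      rw [skew w v, hv w hw, neg_zero]
    have hle2 : perpB Ω (perpB Ω W) ≤ ω.orthogonal (ω.orthogonal W) := by
      calc perpB Ω (perpB Ω W) ≤ perpB ω (perpB Ω W) := hsub _
        _ = ω.orthogonal (ω.orthogonal W) := by rw [hi, hperp_orth W, hperp_orth]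
    have hle3 : finrank ℝ ↥(perpB Ω (perpB Ω W)) ≤ finrank ℝ ↥W := by
      calc finrank ℝ ↥(perpB Ω (perpB Ω W))
          ≤ finrank ℝ ↥(ω.orthogonal (ω.orthogonal W)) := Submodule.finrank_mono hle2
        _ = finrank ℝ ↥W := hfr
    exact (Submodule.eq_of_le_of_finrank_le hle1 hle3).symm
  exact ⟨hi, hii, hiii⟩
end

section
/- The complex dimension of E ∩ E' is at most ½(dim_ℝ(C ∩ C') + e), where e := dim_ℝ V + dim_ℝ(C ∩ C') - dim_ℝ C - dim_ℝ C'. (Linear-algebraic, pointwise content of Proposition 5.1(1) of the paper.) -/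
open Submodule Module TensorProduct

/-!
Put `W = E ∩ E'`, a complex subspace of `ℂ ⊗ V`, and let `W̄` be its conjugate. Both `W` and `W̄`
lie in `ℂ ⊗ (C ∩ C')`. If `u` and `ū` both lie in `E`, pairing them with real vectors `1 ⊗ w`
gives `Ω(Re u, w) ± i Ω(Im u, w) = 0`, so `Re u` and `Im u` lie in the radical of `Ω`, hence
(taking imaginary parts) in `C^{⊥ω}`. Thus `W ∩ W̄ ⊆ ℂ ⊗ (C + C')^{⊥ω}`, and
`4 dim_ℂ W = dim_ℝ (W + W̄) + dim_ℝ (W ∩ W̄) ≤ 2 dim (C ∩ C') + 2 dim (C + C')^{⊥ω}`,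
where `dim (C + C')^{⊥ω} ≤ dim V - dim (C + C') = e` by nondegeneracy of `ω`.
-/

namespace ComplexTensor

variable {M N : Type*} [AddCommGroup M] [Module ℝ M] [AddCommGroup N] [Module ℝ N]

noncomputable def re (M : Type*) [AddCommGroup M] [Module ℝ M] : ℂ ⊗[ℝ] M →ₗ[ℝ] M :=
  TensorProduct.lift ((LinearMap.lsmul ℝ M).comp Complex.reLm)

noncomputable def im (M : Type*) [AddCommGroup M] [Module ℝ M] : ℂ ⊗[ℝ] M →ₗ[ℝ] M :=
  TensorProduct.lift ((LinearMap.lsmul ℝ M).comp Complex.imLm)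

noncomputable def conj (M : Type*) [AddCommGroup M] [Module ℝ M] : ℂ ⊗[ℝ] M ≃ₗ[ℝ] ℂ ⊗[ℝ] M :=
  LinearEquiv.rTensor M Complex.conjAe.toLinearEquiv

@[simp] lemma re_tmul (c : ℂ) (v : M) : re M (c ⊗ₜ v) = c.re • v := rfl

@[simp] lemma im_tmul (c : ℂ) (v : M) : im M (c ⊗ₜ v) = c.im • v := rfl

@[simp] lemma conj_tmul (c : ℂ) (v : M) : conj M (c ⊗ₜ v) = starRingEnd ℂ c ⊗ₜ v := rfl

@[simp] lemma re_conj (u : ℂ ⊗[ℝ] M) : re M (conj M u) = re M u := by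
  induction u with
  | zero => simp
  | tmul c v => simp
  | add x y hx hy => simp [hx, hy]

@[simp] lemma im_conj (u : ℂ ⊗[ℝ] M) : im M (conj M u) = -im M u := by
  induction u with
  | zero => simp
  | tmul c v => simp
  | add x y hx hy => simp [hx, hy, add_comm]

@[simp] lemma conj_conj (u : ℂ ⊗[ℝ] M) : conj M (conj M u) = u := by
  induction u with
  | zero => simp
  | tmul c v => simp
  | add x y hx hy => simp [hx, hy]

lemma one_tmul_re_add_I_tmul_im (u : ℂ ⊗[ℝ] M) : 1 ⊗ₜ re M u + Complex.I ⊗ₜ im M u = u := by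
  induction u with
  | zero => simp
  | tmul c v =>
    rw [re_tmul, im_tmul, tmul_smul, tmul_smul, smul_tmul', smul_tmul', ← add_tmul]
    congr 1
    simp [Complex.real_smul]
  | add x y hx hy =>
    conv_rhs => rw [← hx, ← hy]
    simp only [map_add, tmul_add]
    abel

lemma ext_re_im {u v : ℂ ⊗[ℝ] M} (hre : re M u = re M v) (him : im M u = im M v) : u = v := by
  rw [← one_tmul_re_add_I_tmul_im u, ← one_tmul_re_add_I_tmul_im v, hre, him]

@[simp] lemma re_baseChange (f : M →ₗ[ℝ] N) (u : ℂ ⊗[ℝ] M) :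
    re N (f.baseChange ℂ u) = f (re M u) := by
  induction u with
  | zero => simp
  | tmul c v => simp
  | add x y hx hy => simp [hx, hy]

@[simp] lemma im_baseChange (f : M →ₗ[ℝ] N) (u : ℂ ⊗[ℝ] M) :
    im N (f.baseChange ℂ u) = f (im M u) := by
  induction u with
  | zero => simp
  | tmul c v => simp
  | add x y hx hy => simp [hx, hy]

lemma baseChange_injective {f : M →ₗ[ℝ] N} (hf : Function.Injective f) :
    Function.Injective (f.baseChange ℂ) := by
  rw [LinearMap.baseChange_eq_ltensor]
  exact Module.Flat.lTensor_preserves_injective_linearMap f hf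

lemma conj_baseChange (f : M →ₗ[ℝ] N) (u : ℂ ⊗[ℝ] M) :
    conj N (f.baseChange ℂ u) = f.baseChange ℂ (conj M u) := by
  induction u with
  | zero => simp
  | tmul c v => simp
  | add x y hx hy => simp [hx, hy]

/-- `ℂ ⊗ S` inside `ℂ ⊗ M`, described through real and imaginary parts. -/
noncomputable def complexification (S : Submodule ℝ M) : Submodule ℝ (ℂ ⊗[ℝ] M) :=
  S.comap (re M) ⊓ S.comap (im M)

lemma mem_complexification {S : Submodule ℝ M} {u : ℂ ⊗[ℝ] M} :
    u ∈ complexification S ↔ re M u ∈ S ∧ im M u ∈ S := Iff.rfl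

lemma complexification_inf (S T : Submodule ℝ M) :
    complexification (S ⊓ T) = complexification S ⊓ complexification T := by
  ext u
  simp only [mem_complexification, Submodule.mem_inf]
  tauto

lemma finrank_complexification_le [FiniteDimensional ℝ M] (S : Submodule ℝ M) :
    finrank ℝ (complexification S) ≤ 2 * finrank ℝ S := by
  let reIm : complexification S →ₗ[ℝ] S × S :=
    ((re M).restrict fun _ hu ↦ (mem_complexification.1 hu).1).prod
      ((im M).restrict fun _ hu ↦ (mem_complexification.1 hu).2)
  have hinj : Function.Injective reIm := fun u v huv ↦
    Subtype.ext (ext_re_im (congrArg (Subtype.val ∘ Prod.fst) huv)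
      (congrArg (Subtype.val ∘ Prod.snd) huv))
  simpa [two_mul] using LinearMap.finrank_le_finrank_of_injective hinj

lemma map_baseChange_subtype_le (S : Submodule ℝ M) (X : Submodule ℂ (ℂ ⊗[ℝ] S)) :
    (X.map (S.subtype.baseChange ℂ)).restrictScalars ℝ ≤ complexification S := by
  rintro _ ⟨t, -, rfl⟩
  simp [mem_complexification]

lemma conj_mem_complexification {S : Submodule ℝ M} {u : ℂ ⊗[ℝ] M}
    (hu : u ∈ complexification S) : conj M u ∈ complexification S := by
  simpa [mem_complexification] using hu

theorem two_mul_finrank_le_of_conj [FiniteDimensional ℝ M] (W : Submodule ℂ (ℂ ⊗[ℝ] M))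
    {S P : Submodule ℝ M} (hS : W.restrictScalars ℝ ≤ complexification S)
    (hP : ∀ u ∈ W, conj M u ∈ W → u ∈ complexification P) :
    2 * finrank ℂ W ≤ finrank ℝ S + finrank ℝ P := by
  set A := W.restrictScalars ℝ
  set B := A.map (conj M).toLinearMap
  have hA : finrank ℝ A = 2 * finrank ℂ W := finrank_real_of_complex W
  have hB : finrank ℝ B = finrank ℝ A := LinearEquiv.finrank_map_eq _ A
  have hsup : A ⊔ B ≤ complexification S := by
    refine sup_le hS ?_
    rintro _ ⟨u, hu, rfl⟩
    exact conj_mem_complexification (hS hu)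
  have hinf : A ⊓ B ≤ complexification P := by
    rintro u ⟨huW, w, hwW, rfl⟩
    exact hP _ huW (by rwa [LinearEquiv.coe_coe, conj_conj])
  have hsum := Submodule.finrank_sup_add_finrank_inf_eq A B
  have hsupS := (Submodule.finrank_mono hsup).trans (finrank_complexification_le S)
  have hinfP := (Submodule.finrank_mono hinf).trans (finrank_complexification_le P)
  omega

lemma apply_one_tmul_right (Ω : M →ₗ[ℝ] M →ₗ[ℝ] ℂ) (Ωc : ℂ ⊗[ℝ] M →ₗ[ℂ] ℂ ⊗[ℝ] M →ₗ[ℂ] ℂ)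
    (hΩc : ∀ u v, Ωc (1 ⊗ₜ u) (1 ⊗ₜ v) = Ω u v) (u : ℂ ⊗[ℝ] M) (w : M) :
    Ωc u (1 ⊗ₜ w) = Ω (re M u) w + Complex.I * Ω (im M u) w := by
  have hI : (Complex.I ⊗ₜ im M u : ℂ ⊗[ℝ] M) = Complex.I • (1 ⊗ₜ im M u) := by
    rw [smul_tmul', smul_eq_mul, mul_one]
  conv_lhs => rw [← one_tmul_re_add_I_tmul_im u, hI]
  simp [hΩc]

lemma re_mem_perpB_and_im_mem_perpB (Ω : M →ₗ[ℝ] M →ₗ[ℝ] ℂ)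
    (Ωc : ℂ ⊗[ℝ] M →ₗ[ℂ] ℂ ⊗[ℝ] M →ₗ[ℂ] ℂ) (hΩc : ∀ u v, Ωc (1 ⊗ₜ u) (1 ⊗ₜ v) = Ω u v)
    {t : ℂ ⊗[ℝ] M} (ht : t ∈ perpB Ωc ⊤) (hct : conj M t ∈ perpB Ωc ⊤) :
    re M t ∈ perpB Ω ⊤ ∧ im M t ∈ perpB Ω ⊤ := by
  have key : ∀ w, Ω (re M t) w = 0 ∧ Ω (im M t) w = 0 := by
    intro w
    have h₁ := ht (1 ⊗ₜ w) trivial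
    have h₂ := hct (1 ⊗ₜ w) trivial
    rw [apply_one_tmul_right Ω Ωc hΩc] at h₁ h₂
    rw [re_conj, im_conj, map_neg, LinearMap.neg_apply] at h₂
    constructor
    · linear_combination (h₁ + h₂) / 2
    · linear_combination (-Complex.I / 2) * (h₁ - h₂) + Ω (im M t) w * Complex.I_sq
  exact ⟨fun w _ ↦ (key w).1, fun w _ ↦ (key w).2⟩

end ComplexTensor

open ComplexTensor

lemma perpB_sup {R V N : Type*} [CommRing R] [AddCommGroup V] [Module R V]
    [AddCommGroup N] [Module R N] (B : V →ₗ[R] V →ₗ[R] N) (S T : Submodule R V) :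
    perpB B (S ⊔ T) = perpB B S ⊓ perpB B T := by
  ext v
  refine ⟨fun h ↦ ⟨fun w hw ↦ h w (le_sup_left (a := S) hw),
    fun w hw ↦ h w (le_sup_right (a := S) hw)⟩, ?_⟩
  rintro ⟨hS, hT⟩ _ hw
  obtain ⟨s, hs, t, ht, rfl⟩ := Submodule.mem_sup.1 hw
  rw [map_add, hS s hs, hT t ht, add_zero]

lemma finrank_perpB_add_finrank_le {K V : Type*} [Field K] [AddCommGroup V] [Module K V]
    [FiniteDimensional K V] (ω : V →ₗ[K] V →ₗ[K] K) (hω : ∀ v, (∀ w, ω v w = 0) → v = 0)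
    (S : Submodule K V) : finrank K (perpB ω S) + finrank K S ≤ finrank K V := by
  have hperp : perpB ω S = S.dualAnnihilator.comap ω := by
    ext v
    simp only [Submodule.mem_comap, Submodule.mem_dualAnnihilator]
    exact Iff.rfl
  have hinj : Function.Injective ω := LinearMap.ker_eq_bot.1 <|
    LinearMap.ker_eq_bot'.2 fun v hv ↦ hω v fun w ↦ by rw [hv, LinearMap.zero_apply]
  have hle : finrank K (S.dualAnnihilator.comap ω) ≤ finrank K S.dualAnnihilator :=
    (Submodule.equivMapOfInjective ω hinj _).finrank_eq.trans_le
      (Submodule.finrank_mono (Submodule.map_comap_le ω _))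
  have hann := Subspace.finrank_add_finrank_dualAnnihilator_eq S
  rw [hperp]
  omega

lemma coe_mem_perpB_of_mem_perpB_top {V : Type*} [AddCommGroup V] [Module ℝ V]
    (ω : V →ₗ[ℝ] V →ₗ[ℝ] ℝ) {C : Submodule ℝ V} (Ω : C →ₗ[ℝ] C →ₗ[ℝ] ℂ)
    (hIm : ∀ u v : C, (Ω u v).im = ω u v) {x : C} (hx : x ∈ perpB Ω ⊤) :
    (x : V) ∈ perpB ω C := fun w hw ↦ by
  rw [← hIm x ⟨w, hw⟩, hx _ trivial, Complex.zero_im]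

lemma mem_complexification_perpB_of_conj_mem {V : Type*} [AddCommGroup V] [Module ℝ V]
    (ω : V →ₗ[ℝ] V →ₗ[ℝ] ℝ) {C : Submodule ℝ V} (Ω : C →ₗ[ℝ] C →ₗ[ℝ] ℂ)
    (hIm : ∀ u v : C, (Ω u v).im = ω u v) (Ωc : ℂ ⊗[ℝ] C →ₗ[ℂ] ℂ ⊗[ℝ] C →ₗ[ℂ] ℂ)
    (hΩc : ∀ u v, Ωc (1 ⊗ₜ u) (1 ⊗ₜ v) = Ω u v) {u : ℂ ⊗[ℝ] V}
    (hu : u ∈ (perpB Ωc ⊤).map (C.subtype.baseChange ℂ))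
    (hcu : conj V u ∈ (perpB Ωc ⊤).map (C.subtype.baseChange ℂ)) :
    u ∈ complexification (perpB ω C) := by
  obtain ⟨t, ht, rfl⟩ := hu
  obtain ⟨s, hs, hst⟩ := hcu
  obtain rfl : s = conj C t :=
    baseChange_injective C.injective_subtype (hst.trans (conj_baseChange _ t))
  obtain ⟨hre, him⟩ := re_mem_perpB_and_im_mem_perpB Ω Ωc hΩc ht hs
  rw [mem_complexification, re_baseChange, im_baseChange]
  exact ⟨coe_mem_perpB_of_mem_perpB_top ω Ω hIm hre, coe_mem_perpB_of_mem_perpB_top ω Ω hIm him⟩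

theorem stmt_12_general {V : Type*} [AddCommGroup V] [Module ℝ V] [FiniteDimensional ℝ V]
    (ω : V →ₗ[ℝ] V →ₗ[ℝ] ℝ)
    (hωnd : ∀ v : V, (∀ w : V, ω v w = 0) → v = 0)
    (C C' : Submodule ℝ V)
    (Ω : ↥C →ₗ[ℝ] ↥C →ₗ[ℝ] ℂ)
    (hIm : ∀ u v : ↥C, (Ω u v).im = ω ↑u ↑v)
    (Ω' : ↥C' →ₗ[ℝ] ↥C' →ₗ[ℝ] ℂ)
    (hIm' : ∀ u v : ↥C', (Ω' u v).im = ω ↑u ↑v)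
    (Ωc : (ℂ ⊗[ℝ] ↥C) →ₗ[ℂ] (ℂ ⊗[ℝ] ↥C) →ₗ[ℂ] ℂ)
    (hΩc : ∀ u v : ↥C, Ωc ((1 : ℂ) ⊗ₜ[ℝ] u) ((1 : ℂ) ⊗ₜ[ℝ] v) = Ω u v)
    (Ωc' : (ℂ ⊗[ℝ] ↥C') →ₗ[ℂ] (ℂ ⊗[ℝ] ↥C') →ₗ[ℂ] ℂ)
    (hΩc' : ∀ u v : ↥C', Ωc' ((1 : ℂ) ⊗ₜ[ℝ] u) ((1 : ℂ) ⊗ₜ[ℝ] v) = Ω' u v) :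
    2 * finrank ℂ ↥((perpB Ωc ⊤).map (LinearMap.baseChange ℂ C.subtype)
        ⊓ (perpB Ωc' ⊤).map (LinearMap.baseChange ℂ C'.subtype))
      ≤ finrank ℝ ↥(C ⊓ C')
        + (finrank ℝ V + finrank ℝ ↥(C ⊓ C') - finrank ℝ ↥C - finrank ℝ ↥C') := by
  set E := (perpB Ωc ⊤).map (LinearMap.baseChange ℂ C.subtype)
  set E' := (perpB Ωc' ⊤).map (LinearMap.baseChange ℂ C'.subtype)
  have hS : (E ⊓ E').restrictScalars ℝ ≤ complexification (C ⊓ C') := fun u hu ↦ by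
    rw [complexification_inf]
    exact ⟨map_baseChange_subtype_le C _ hu.1, map_baseChange_subtype_le C' _ hu.2⟩
  have hP : ∀ u ∈ E ⊓ E', conj V u ∈ E ⊓ E' → u ∈ complexification (perpB ω (C ⊔ C')) :=
    fun u hu hcu ↦ by
      rw [perpB_sup, complexification_inf]
      exact ⟨mem_complexification_perpB_of_conj_mem ω Ω hIm Ωc hΩc hu.1 hcu.1,
        mem_complexification_perpB_of_conj_mem ω Ω' hIm' Ωc' hΩc' hu.2 hcu.2⟩
  have hW := two_mul_finrank_le_of_conj (E ⊓ E') hS hP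
  have hperp := finrank_perpB_add_finrank_le ω hωnd (C ⊔ C')
  have hCC' := Submodule.finrank_sup_add_finrank_inf_eq C C'
  omega

/-- The complex dimension of `E ∩ E'` (radicals of the ℂ-bilinear
extensions of `Ω`, `Ω'` inside `ℂ ⊗ V`) is at most `½(dim_ℝ(C ∩ C') + e)`, where
`e = dim V + dim(C ∩ C') - dim C - dim C'`. -/
theorem stmt_12 {V : Type*} [AddCommGroup V] [Module ℝ V] [FiniteDimensional ℝ V]
    (ω : V →ₗ[ℝ] V →ₗ[ℝ] ℝ) (hωalt : ∀ v : V, ω v v = 0)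
    (hωnd : ∀ v : V, (∀ w : V, ω v w = 0) → v = 0)
    (C C' : Submodule ℝ V) (hC : perpB ω C ≤ C) (hC' : perpB ω C' ≤ C')
    (Ω : ↥C →ₗ[ℝ] ↥C →ₗ[ℝ] ℂ) (hAlt : ∀ v : ↥C, Ω v v = 0)
    (hIm : ∀ u v : ↥C, (Ω u v).im = ω ↑u ↑v)
    (Ω' : ↥C' →ₗ[ℝ] ↥C' →ₗ[ℝ] ℂ) (hAlt' : ∀ v : ↥C', Ω' v v = 0)
    (hIm' : ∀ u v : ↥C', (Ω' u v).im = ω ↑u ↑v)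
    (hcomp : ∃ (Ωq : (↥C ⧸ perpB Ω ⊤) →ₗ[ℝ] (↥C ⧸ perpB Ω ⊤) →ₗ[ℝ] ℂ)
        (I : (↥C ⧸ perpB Ω ⊤) →ₗ[ℝ] (↥C ⧸ perpB Ω ⊤)),
        (∀ u v : ↥C, Ωq ((perpB Ω ⊤).mkQ u) ((perpB Ω ⊤).mkQ v) = Ω u v) ∧
        (∀ q, I (I q) = -q) ∧ (∀ u v, (Ωq u v).re = (Ωq (I u) v).im))
    (hcomp' : ∃ (Ωq' : (↥C' ⧸ perpB Ω' ⊤) →ₗ[ℝ] (↥C' ⧸ perpB Ω' ⊤) →ₗ[ℝ] ℂ)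
        (I' : (↥C' ⧸ perpB Ω' ⊤) →ₗ[ℝ] (↥C' ⧸ perpB Ω' ⊤)),
        (∀ u v : ↥C', Ωq' ((perpB Ω' ⊤).mkQ u) ((perpB Ω' ⊤).mkQ v) = Ω' u v) ∧
        (∀ q, I' (I' q) = -q) ∧ (∀ u v, (Ωq' u v).re = (Ωq' (I' u) v).im))
    (Ωc : (ℂ ⊗[ℝ] ↥C) →ₗ[ℂ] (ℂ ⊗[ℝ] ↥C) →ₗ[ℂ] ℂ)
    (hΩc : ∀ u v : ↥C, Ωc ((1 : ℂ) ⊗ₜ[ℝ] u) ((1 : ℂ) ⊗ₜ[ℝ] v) = Ω u v)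
    (Ωc' : (ℂ ⊗[ℝ] ↥C') →ₗ[ℂ] (ℂ ⊗[ℝ] ↥C') →ₗ[ℂ] ℂ)
    (hΩc' : ∀ u v : ↥C', Ωc' ((1 : ℂ) ⊗ₜ[ℝ] u) ((1 : ℂ) ⊗ₜ[ℝ] v) = Ω' u v) :
    2 * finrank ℂ ↥((perpB Ωc ⊤).map (LinearMap.baseChange ℂ C.subtype)
        ⊓ (perpB Ωc' ⊤).map (LinearMap.baseChange ℂ C'.subtype))
      ≤ finrank ℝ ↥(C ⊓ C')
        + (finrank ℝ V + finrank ℝ ↥(C ⊓ C') - finrank ℝ ↥C - finrank ℝ ↥C') :=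
  stmt_12_general ω hωnd C C' Ω hIm Ω' hIm' Ωc hΩc Ωc' hΩc'
end

section
/- One has (E ∩ E') ∩ conj(E ∩ E') = ℂ⊗(C^{⊥ω} ∩ C'^{⊥ω}) inside ℂ⊗V; in particular, the real points of (E ∩ E') ∩ conj(E ∩ E') form exactly the subspace C^{⊥ω} ∩ C'^{⊥ω} ⊆ C ∩ C'. (A step in the proof of Proposition 5.1 of the paper.) -/
open Submodule Module TensorProduct

/-- Conjugation on the complexification `ℂ ⊗ V`, induced by complex conjugation
on the scalar factor. -/
noncomputable def conjT (V : Type*) [AddCommGroup V] [Module ℝ V] :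
    (ℂ ⊗[ℝ] V) →ₗ[ℝ] (ℂ ⊗[ℝ] V) :=
  LinearMap.rTensor V Complex.conjAe.toLinearMap

section Aux
open Submodule Module TensorProduct

noncomputable def rePartT (V : Type*) [AddCommGroup V] [Module ℝ V] : (ℂ ⊗[ℝ] V) →ₗ[ℝ] V :=
  (TensorProduct.lid ℝ V).toLinearMap ∘ₗ LinearMap.rTensor V Complex.reLm

noncomputable def imPartT (V : Type*) [AddCommGroup V] [Module ℝ V] : (ℂ ⊗[ℝ] V) →ₗ[ℝ] V :=
  (TensorProduct.lid ℝ V).toLinearMap ∘ₗ LinearMap.rTensor V Complex.imLm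

variable {V W : Type*} [AddCommGroup V] [Module ℝ V] [AddCommGroup W] [Module ℝ W]

@[simp] lemma rePartT_tmul (z : ℂ) (v : V) : rePartT V (z ⊗ₜ[ℝ] v) = z.re • v := by
  simp [rePartT]

@[simp] lemma imPartT_tmul (z : ℂ) (v : V) : imPartT V (z ⊗ₜ[ℝ] v) = z.im • v := by
  simp [imPartT]

lemma decompT (x : ℂ ⊗[ℝ] V) :
    (1 : ℂ) ⊗ₜ[ℝ] rePartT V x + Complex.I ⊗ₜ[ℝ] imPartT V x = x := by
  induction x using TensorProduct.induction_on with
  | zero => simp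
  | tmul z v =>
      simp only [rePartT_tmul, imPartT_tmul, TensorProduct.tmul_smul,
        TensorProduct.smul_tmul']
      rw [← TensorProduct.add_tmul]
      congr 1
      simp [Complex.ext_iff]
  | add a b ha hb =>
      simp only [map_add, TensorProduct.tmul_add]
      rw [add_add_add_comm, ha, hb]

lemma rePartT_baseChange (f : W →ₗ[ℝ] V) (x : ℂ ⊗[ℝ] W) :
    rePartT V (LinearMap.baseChange ℂ f x) = f (rePartT W x) := by
  induction x using TensorProduct.induction_on with
  | zero => simp
  | tmul z v => simp
  | add a b ha hb => simp [ha, hb]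

lemma imPartT_baseChange (f : W →ₗ[ℝ] V) (x : ℂ ⊗[ℝ] W) :
    imPartT V (LinearMap.baseChange ℂ f x) = f (imPartT W x) := by
  induction x using TensorProduct.induction_on with
  | zero => simp
  | tmul z v => simp
  | add a b ha hb => simp [ha, hb]

end Aux

section Aux2
open Submodule Module TensorProduct

variable {V : Type*} [AddCommGroup V] [Module ℝ V]

@[simp] lemma conjT_tmul (z : ℂ) (v : V) :
    conjT V (z ⊗ₜ[ℝ] v) = (starRingEnd ℂ z) ⊗ₜ[ℝ] v := by
  simp [conjT]

lemma conjT_conjT (x : ℂ ⊗[ℝ] V) : conjT V (conjT V x) = x := by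
  induction x using TensorProduct.induction_on with
  | zero => simp
  | tmul z v => simp
  | add a b ha hb => simp [ha, hb]

lemma rePartT_conjT (x : ℂ ⊗[ℝ] V) : rePartT V (conjT V x) = rePartT V x := by
  induction x using TensorProduct.induction_on with
  | zero => simp
  | tmul z v => simp
  | add a b ha hb => simp [ha, hb]

lemma imPartT_conjT (x : ℂ ⊗[ℝ] V) : imPartT V (conjT V x) = - imPartT V x := by
  induction x using TensorProduct.induction_on with
  | zero => simp
  | tmul z v => simp
  | add a b ha hb => simp [ha, hb, add_comm]

lemma smulI_tmul (b : V) : (Complex.I ⊗ₜ[ℝ] b : ℂ ⊗[ℝ] V) = Complex.I • ((1:ℂ) ⊗ₜ[ℝ] b) := by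
  rw [TensorProduct.smul_tmul', smul_eq_mul, mul_one]

lemma rad_of_im_zero {C : Type*} [AddCommGroup C] [Module ℝ C]
    (Ω : C →ₗ[ℝ] C →ₗ[ℝ] ℂ) (hAlt : ∀ v : C, Ω v v = 0)
    (hcomp : ∃ (Ωq : (C ⧸ perpB Ω ⊤) →ₗ[ℝ] (C ⧸ perpB Ω ⊤) →ₗ[ℝ] ℂ)
        (I : (C ⧸ perpB Ω ⊤) →ₗ[ℝ] (C ⧸ perpB Ω ⊤)),
        (∀ u v : C, Ωq ((perpB Ω ⊤).mkQ u) ((perpB Ω ⊤).mkQ v) = Ω u v) ∧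
        (∀ q, I (I q) = -q) ∧ (∀ u v, (Ωq u v).re = (Ωq (I u) v).im))
    (u : C) (him : ∀ v : C, (Ω u v).im = 0) : ∀ v : C, Ω u v = 0 := by
  obtain ⟨Ωq, I, hq, hI2, hRe⟩ := hcomp
  have hsurj : Function.Surjective (perpB Ω ⊤).mkQ := Submodule.mkQ_surjective _
  have hqAlt : ∀ x, Ωq x x = 0 := by
    intro x; obtain ⟨a, rfl⟩ := hsurj x; rw [hq]; exact hAlt a
  have hanti : ∀ x y, Ωq x y = - Ωq y x := by
    intro x y
    have h := hqAlt (x + y)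
    simp only [map_add, LinearMap.add_apply, hqAlt, zero_add, add_zero] at h
    exact eq_neg_of_add_eq_zero_right h
  set q := (perpB Ω ⊤).mkQ u with hqdef
  have him' : ∀ y, (Ωq q y).im = 0 := by
    intro y; obtain ⟨v, rfl⟩ := hsurj y; rw [hqdef, hq]; exact him v
  have hre1 : ∀ y, (Ωq (I q) y).re = 0 := by
    intro y
    have h1 := hRe (-(I q)) y
    simp only [map_neg, hI2, neg_neg, LinearMap.neg_apply, Complex.neg_re, him'] at h1
    linarith
  have hre2 : ∀ y, (Ωq y (I q)).re = 0 := by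
    intro y; rw [hanti]; simp [hre1 y]
  have him2 : ∀ y, (Ωq (I y) (I q)).im = 0 := by
    intro y; rw [← hRe]; exact hre2 y
  have him3 : ∀ z, (Ωq z (I q)).im = 0 := by
    intro z
    have := him2 (-(I z))
    simpa [map_neg, hI2, neg_neg] using this
  have him4 : ∀ z, (Ωq (I q) z).im = 0 := by
    intro z; rw [hanti]; simp [him3 z]
  have hre0 : ∀ y, (Ωq q y).re = 0 := by
    intro y; rw [hRe]; exact him4 y
  intro v
  have : Ωq q ((perpB Ω ⊤).mkQ v) = 0 := by
    apply Complex.ext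
    · simpa using hre0 ((perpB Ω ⊤).mkQ v)
    · simpa using him' ((perpB Ω ⊤).mkQ v)
  rw [hqdef, hq] at this
  exact this

end Aux2

section Aux3
open Submodule Module TensorProduct

variable {V : Type*} [AddCommGroup V] [Module ℝ V]

lemma perp_of_gen {Cty : Type*} [AddCommGroup Cty] [Module ℝ Cty]
    (Ωc : (ℂ ⊗[ℝ] Cty) →ₗ[ℂ] (ℂ ⊗[ℝ] Cty) →ₗ[ℂ] ℂ) (y : ℂ ⊗[ℝ] Cty)
    (h : ∀ v : Cty, Ωc y ((1:ℂ) ⊗ₜ[ℝ] v) = 0) : y ∈ perpB Ωc ⊤ := by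
  suffices h' : ∀ t : ℂ ⊗[ℝ] Cty, Ωc y t = 0 by
    intro t _; exact h' t
  intro t
  induction t using TensorProduct.induction_on with
  | zero => simp
  | tmul z v =>
      have : (z ⊗ₜ[ℝ] v : ℂ ⊗[ℝ] Cty) = z • ((1:ℂ) ⊗ₜ[ℝ] v) := by
        rw [TensorProduct.smul_tmul', smul_eq_mul, mul_one]
      rw [this, map_smul, h v, smul_zero]
  | add a b ha hb => rw [map_add, ha, hb, add_zero]

lemma eval_two {Cty : Type*} [AddCommGroup Cty] [Module ℝ Cty]
    (Ω : Cty →ₗ[ℝ] Cty →ₗ[ℝ] ℂ)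
    (Ωc : (ℂ ⊗[ℝ] Cty) →ₗ[ℂ] (ℂ ⊗[ℝ] Cty) →ₗ[ℂ] ℂ)
    (hΩc : ∀ u v : Cty, Ωc ((1 : ℂ) ⊗ₜ[ℝ] u) ((1 : ℂ) ⊗ₜ[ℝ] v) = Ω u v)
    (a b v : Cty) :
    Ωc ((1:ℂ) ⊗ₜ[ℝ] a + Complex.I ⊗ₜ[ℝ] b) ((1:ℂ) ⊗ₜ[ℝ] v)
      = Ω a v + Complex.I * Ω b v := by
  rw [map_add, LinearMap.add_apply, hΩc, smulI_tmul, map_smul, LinearMap.smul_apply,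
    hΩc, smul_eq_mul]

/-- Membership in the image of the left kernel of `Ωc` under `baseChange` of the inclusion. -/
lemma mem_map_perp_iff (C : Submodule ℝ V)
    (Ω : ↥C →ₗ[ℝ] ↥C →ₗ[ℝ] ℂ)
    (Ωc : (ℂ ⊗[ℝ] ↥C) →ₗ[ℂ] (ℂ ⊗[ℝ] ↥C) →ₗ[ℂ] ℂ)
    (hΩc : ∀ u v : ↥C, Ωc ((1 : ℂ) ⊗ₜ[ℝ] u) ((1 : ℂ) ⊗ₜ[ℝ] v) = Ω u v)
    (x : ℂ ⊗[ℝ] V) :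
    x ∈ (perpB Ωc ⊤).map (LinearMap.baseChange ℂ C.subtype)
      ↔ ∃ a b : ↥C, (↑a = rePartT V x ∧ ↑b = imPartT V x) ∧
          ∀ v : ↥C, Ω a v + Complex.I * Ω b v = 0 := by
  constructor
  · rintro ⟨y, hy, rfl⟩
    refine ⟨rePartT _ y, imPartT _ y, ⟨?_, ?_⟩, ?_⟩
    · rw [rePartT_baseChange]; rfl
    · rw [imPartT_baseChange]; rfl
    · intro v
      have h0 : Ωc y ((1:ℂ) ⊗ₜ[ℝ] v) = 0 := hy _ trivial
      rw [← decompT y] at h0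
      rw [← eval_two Ω Ωc hΩc]
      exact h0
  · rintro ⟨a, b, ⟨ha, hb⟩, hperp⟩
    refine ⟨(1:ℂ) ⊗ₜ[ℝ] a + Complex.I ⊗ₜ[ℝ] b, ?_, ?_⟩
    · apply perp_of_gen
      intro v
      rw [eval_two Ω Ωc hΩc]
      exact hperp v
    · rw [map_add, LinearMap.baseChange_tmul, LinearMap.baseChange_tmul]
      show (1:ℂ) ⊗ₜ[ℝ] (a : V) + Complex.I ⊗ₜ[ℝ] (b : V) = x
      rw [ha, hb]
      exact decompT x

lemma mem_range_baseChange (W : Submodule ℝ V) (x : ℂ ⊗[ℝ] V) :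
    x ∈ LinearMap.range (LinearMap.baseChange ℂ W.subtype)
      ↔ rePartT V x ∈ W ∧ imPartT V x ∈ W := by
  constructor
  · rintro ⟨y, rfl⟩
    rw [rePartT_baseChange, imPartT_baseChange]
    exact ⟨(rePartT _ y).2, (imPartT _ y).2⟩
  · rintro ⟨ha, hb⟩
    refine ⟨(1:ℂ) ⊗ₜ[ℝ] ⟨_, ha⟩ + Complex.I ⊗ₜ[ℝ] ⟨_, hb⟩, ?_⟩
    rw [map_add, LinearMap.baseChange_tmul, LinearMap.baseChange_tmul]
    exact decompT x

end Aux3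

section Aux4
open Submodule Module TensorProduct

variable {V : Type*} [AddCommGroup V] [Module ℝ V]

/-- From `x` and `conj x` lying in the image of the left kernel of `Ωc`, deduce that the
real and imaginary parts of `x` are `ω`-orthogonal to `C`. -/
lemma parts_mem_perp (ω : V →ₗ[ℝ] V →ₗ[ℝ] ℝ) (C : Submodule ℝ V)
    (Ω : ↥C →ₗ[ℝ] ↥C →ₗ[ℝ] ℂ)
    (hIm : ∀ u v : ↥C, (Ω u v).im = ω ↑u ↑v)
    (Ωc : (ℂ ⊗[ℝ] ↥C) →ₗ[ℂ] (ℂ ⊗[ℝ] ↥C) →ₗ[ℂ] ℂ)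
    (hΩc : ∀ u v : ↥C, Ωc ((1 : ℂ) ⊗ₜ[ℝ] u) ((1 : ℂ) ⊗ₜ[ℝ] v) = Ω u v)
    (x : ℂ ⊗[ℝ] V)
    (hx : x ∈ (perpB Ωc ⊤).map (LinearMap.baseChange ℂ C.subtype))
    (hc : conjT V x ∈ (perpB Ωc ⊤).map (LinearMap.baseChange ℂ C.subtype)) :
    rePartT V x ∈ perpB ω C ∧ imPartT V x ∈ perpB ω C := by
  rw [mem_map_perp_iff C Ω Ωc hΩc] at hx hc
  obtain ⟨a, b, ⟨ha, hb⟩, hab⟩ := hx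
  obtain ⟨a', b', ⟨ha', hb'⟩, hab'⟩ := hc
  have haa : a' = a := by
    have hv : (a' : V) = (a : V) := by rw [ha', rePartT_conjT, ← ha]
    exact Subtype.coe_injective hv
  have hbb : b' = -b := by
    have hv : (b' : V) = ((-b : ↥C) : V) := by
      rw [hb', imPartT_conjT, ← hb]; simp
    exact Subtype.coe_injective hv
  rw [haa, hbb] at hab'
  have hΩa : ∀ v : ↥C, Ω a v = 0 := by
    intro v
    have h1 := hab v
    have h2 := hab' v
    rw [map_neg, LinearMap.neg_apply] at h2
    linear_combination h1 / 2 + h2 / 2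
  have hΩb : ∀ v : ↥C, Ω b v = 0 := by
    intro v
    have h1 := hab v
    rw [hΩa, zero_add] at h1
    have : Ω b v = 0 ∨ (Complex.I = 0) := by
      rcases mul_eq_zero.mp h1 with h | h
      · exact Or.inr h
      · exact Or.inl h
    rcases this with h | h
    · exact h
    · exact absurd h Complex.I_ne_zero
  constructor
  · intro w hw
    have := congrArg Complex.im (hΩa ⟨w, hw⟩)
    rw [hIm] at this
    rw [← ha]
    simpa using this
  · intro w hw
    have := congrArg Complex.im (hΩb ⟨w, hw⟩)
    rw [hIm] at this
    rw [← hb]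
    simpa using this

/-- Conversely: an element whose real and imaginary parts are `ω`-orthogonal to a coisotropic
`C` lies in the image of the left kernel of `Ωc`. -/
lemma mem_map_of_parts (ω : V →ₗ[ℝ] V →ₗ[ℝ] ℝ) (C : Submodule ℝ V)
    (hC : perpB ω C ≤ C)
    (Ω : ↥C →ₗ[ℝ] ↥C →ₗ[ℝ] ℂ) (hAlt : ∀ v : ↥C, Ω v v = 0)
    (hIm : ∀ u v : ↥C, (Ω u v).im = ω ↑u ↑v)
    (hcomp : ∃ (Ωq : (↥C ⧸ perpB Ω ⊤) →ₗ[ℝ] (↥C ⧸ perpB Ω ⊤) →ₗ[ℝ] ℂ)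
        (I : (↥C ⧸ perpB Ω ⊤) →ₗ[ℝ] (↥C ⧸ perpB Ω ⊤)),
        (∀ u v : ↥C, Ωq ((perpB Ω ⊤).mkQ u) ((perpB Ω ⊤).mkQ v) = Ω u v) ∧
        (∀ q, I (I q) = -q) ∧ (∀ u v, (Ωq u v).re = (Ωq (I u) v).im))
    (Ωc : (ℂ ⊗[ℝ] ↥C) →ₗ[ℂ] (ℂ ⊗[ℝ] ↥C) →ₗ[ℂ] ℂ)
    (hΩc : ∀ u v : ↥C, Ωc ((1 : ℂ) ⊗ₜ[ℝ] u) ((1 : ℂ) ⊗ₜ[ℝ] v) = Ω u v)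
    (x : ℂ ⊗[ℝ] V)
    (hre : rePartT V x ∈ perpB ω C) (him : imPartT V x ∈ perpB ω C) :
    x ∈ (perpB Ωc ⊤).map (LinearMap.baseChange ℂ C.subtype) := by
  rw [mem_map_perp_iff C Ω Ωc hΩc]
  refine ⟨⟨_, hC hre⟩, ⟨_, hC him⟩, ⟨rfl, rfl⟩, ?_⟩
  have hzero : ∀ (u : ↥C), (↑u ∈ perpB ω C) → ∀ v : ↥C, Ω u v = 0 := by
    intro u hu
    apply rad_of_im_zero Ω hAlt hcomp
    intro v
    rw [hIm]
    exact hu ↑v v.2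
  intro v
  rw [hzero ⟨_, hC hre⟩ hre v, hzero ⟨_, hC him⟩ him v, mul_zero, add_zero]

end Aux4

/-- `(E ∩ E') ∩ conj(E ∩ E') = ℂ ⊗ (C^{⊥ω} ∩ C'^{⊥ω})` inside `ℂ ⊗ V`;
in particular the real points of `(E ∩ E') ∩ conj(E ∩ E')` form exactly
`C^{⊥ω} ∩ C'^{⊥ω}`. -/
theorem stmt_13 {V : Type*} [AddCommGroup V] [Module ℝ V] [FiniteDimensional ℝ V]
    (ω : V →ₗ[ℝ] V →ₗ[ℝ] ℝ) (hωalt : ∀ v : V, ω v v = 0)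
    (hωnd : ∀ v : V, (∀ w : V, ω v w = 0) → v = 0)
    (C C' : Submodule ℝ V) (hC : perpB ω C ≤ C) (hC' : perpB ω C' ≤ C')
    (Ω : ↥C →ₗ[ℝ] ↥C →ₗ[ℝ] ℂ) (hAlt : ∀ v : ↥C, Ω v v = 0)
    (hIm : ∀ u v : ↥C, (Ω u v).im = ω ↑u ↑v)
    (Ω' : ↥C' →ₗ[ℝ] ↥C' →ₗ[ℝ] ℂ) (hAlt' : ∀ v : ↥C', Ω' v v = 0)
    (hIm' : ∀ u v : ↥C', (Ω' u v).im = ω ↑u ↑v)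
    (hcomp : ∃ (Ωq : (↥C ⧸ perpB Ω ⊤) →ₗ[ℝ] (↥C ⧸ perpB Ω ⊤) →ₗ[ℝ] ℂ)
        (I : (↥C ⧸ perpB Ω ⊤) →ₗ[ℝ] (↥C ⧸ perpB Ω ⊤)),
        (∀ u v : ↥C, Ωq ((perpB Ω ⊤).mkQ u) ((perpB Ω ⊤).mkQ v) = Ω u v) ∧
        (∀ q, I (I q) = -q) ∧ (∀ u v, (Ωq u v).re = (Ωq (I u) v).im))
    (hcomp' : ∃ (Ωq' : (↥C' ⧸ perpB Ω' ⊤) →ₗ[ℝ] (↥C' ⧸ perpB Ω' ⊤) →ₗ[ℝ] ℂ)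
        (I' : (↥C' ⧸ perpB Ω' ⊤) →ₗ[ℝ] (↥C' ⧸ perpB Ω' ⊤)),
        (∀ u v : ↥C', Ωq' ((perpB Ω' ⊤).mkQ u) ((perpB Ω' ⊤).mkQ v) = Ω' u v) ∧
        (∀ q, I' (I' q) = -q) ∧ (∀ u v, (Ωq' u v).re = (Ωq' (I' u) v).im))
    (Ωc : (ℂ ⊗[ℝ] ↥C) →ₗ[ℂ] (ℂ ⊗[ℝ] ↥C) →ₗ[ℂ] ℂ)
    (hΩc : ∀ u v : ↥C, Ωc ((1 : ℂ) ⊗ₜ[ℝ] u) ((1 : ℂ) ⊗ₜ[ℝ] v) = Ω u v)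
    (Ωc' : (ℂ ⊗[ℝ] ↥C') →ₗ[ℂ] (ℂ ⊗[ℝ] ↥C') →ₗ[ℂ] ℂ)
    (hΩc' : ∀ u v : ↥C', Ωc' ((1 : ℂ) ⊗ₜ[ℝ] u) ((1 : ℂ) ⊗ₜ[ℝ] v) = Ω' u v)
    (S : Submodule ℝ (ℂ ⊗[ℝ] V))
    (hS : S = (((perpB Ωc ⊤).map (LinearMap.baseChange ℂ C.subtype)
        ⊓ (perpB Ωc' ⊤).map (LinearMap.baseChange ℂ C'.subtype)) : Submodule ℂ (ℂ ⊗[ℝ] V)).restrictScalars ℝ) :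
    S ⊓ S.map (conjT V)
      = (LinearMap.range (LinearMap.baseChange ℂ (perpB ω C ⊓ perpB ω C').subtype)).restrictScalars ℝ ∧
    ∀ v : V, ((1 : ℂ) ⊗ₜ[ℝ] v ∈ S ⊓ S.map (conjT V) ↔ v ∈ perpB ω C ⊓ perpB ω C') := by
  have heq : S ⊓ S.map (conjT V)
      = (LinearMap.range (LinearMap.baseChange ℂ
          (perpB ω C ⊓ perpB ω C').subtype)).restrictScalars ℝ := by
    ext x
    rw [Submodule.mem_inf, Submodule.restrictScalars_mem, mem_range_baseChange]
    constructor
    · rintro ⟨hxS, hxc⟩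
      have hconjS : conjT V x ∈ S := by
        obtain ⟨x0, hx0, hx0e⟩ := hxc
        rw [← hx0e, conjT_conjT]
        exact hx0
      rw [hS, Submodule.restrictScalars_mem, Submodule.mem_inf] at hxS hconjS
      obtain ⟨h1, h2⟩ := hxS
      obtain ⟨h1', h2'⟩ := hconjS
      have hCp := parts_mem_perp ω C Ω hIm Ωc hΩc x h1 h1'
      have hCp' := parts_mem_perp ω C' Ω' hIm' Ωc' hΩc' x h2 h2'
      exact ⟨Submodule.mem_inf.mpr ⟨hCp.1, hCp'.1⟩,
        Submodule.mem_inf.mpr ⟨hCp.2, hCp'.2⟩⟩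
    · rintro ⟨hre, him0⟩
      have hmemS : ∀ y : ℂ ⊗[ℝ] V, rePartT V y ∈ perpB ω C ⊓ perpB ω C'
          → imPartT V y ∈ perpB ω C ⊓ perpB ω C' → y ∈ S := by
        intro y hry hiy
        rw [Submodule.mem_inf] at hry hiy
        rw [hS, Submodule.restrictScalars_mem, Submodule.mem_inf]
        exact ⟨mem_map_of_parts ω C hC Ω hAlt hIm hcomp Ωc hΩc y hry.1 hiy.1,
          mem_map_of_parts ω C' hC' Ω' hAlt' hIm' hcomp' Ωc' hΩc' y hry.2 hiy.2⟩
      have hxS : x ∈ S := hmemS x hre him0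
      have hcS : conjT V x ∈ S := by
        apply hmemS
        · rw [rePartT_conjT]; exact hre
        · rw [imPartT_conjT]; exact neg_mem him0
      exact ⟨hxS, ⟨conjT V x, hcS, conjT_conjT x⟩⟩
  refine ⟨heq, ?_⟩
  intro v
  rw [heq, Submodule.restrictScalars_mem, mem_range_baseChange]
  simp
end
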